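/- arXiv:1408.2216 — 4 statements merged into one kernel-verified Lean document; each statement's English description precedes it below -/
import Mathlib

section
/- For every integer d ≥ 1 and every δ > 0, there exists a δ-bracketing cover Δ of [0,1)^d with |Δ| ≤ (1/2)·(2e)^d·(δ^{-1}+1)^d. -/
open MeasureTheory

/-- `Δ` is a `δ`-bracketing cover of `[0,1)^d`: for every `x ∈ [0,1)^d` there is a pair
`(v, w) ∈ Δ` with `v ≤ x ≤ w` componentwise and `λ([0,w) \ [0,v)) ≤ δ`. -/
def IsBracketingCover (d : ℕ) (δ : ℝ) (Δ : Finset ((Fin d → ℝ) × (Fin d → ℝ))) : Prop :=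
  ∀ x : Fin d → ℝ, (∀ i, x i ∈ Set.Ico (0:ℝ) 1) →
    ∃ p ∈ Δ, (∀ i, p.1 i ≤ x i ∧ x i ≤ p.2 i) ∧
      volume ((Set.univ.pi fun i => Set.Ico (0:ℝ) (p.2 i)) \
        (Set.univ.pi fun i => Set.Ico (0:ℝ) (p.1 i))) ≤ ENNReal.ofReal δ

lemma vol_box {n : ℕ} (f : Fin n → ℝ) :
    volume (Set.univ.pi fun i => Set.Ico (0:ℝ) (f i)) = ∏ i, ENNReal.ofReal (f i) := by
  rw [volume_pi_pi]
  simp [Real.volume_Ico]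

lemma vol_diff {n : ℕ} {v w : Fin n → ℝ} (h0 : ∀ i, 0 ≤ v i) (hvw : ∀ i, v i ≤ w i) :
    volume ((Set.univ.pi fun i => Set.Ico (0:ℝ) (w i)) \ (Set.univ.pi fun i => Set.Ico (0:ℝ) (v i)))
      = ENNReal.ofReal (∏ i, w i - ∏ i, v i) := by
  have hsub : (Set.univ.pi fun i => Set.Ico (0:ℝ) (v i)) ⊆ (Set.univ.pi fun i => Set.Ico (0:ℝ) (w i)) :=
    Set.pi_mono fun i _ => Set.Ico_subset_Ico_right (hvw i)
  have hm : MeasurableSet (Set.univ.pi fun i => Set.Ico (0:ℝ) (v i)) :=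
    MeasurableSet.univ_pi fun i => measurableSet_Ico
  have hfin : volume (Set.univ.pi fun i => Set.Ico (0:ℝ) (v i)) ≠ ⊤ := by
    rw [vol_box]
    exact (ENNReal.prod_lt_top fun i _ => ENNReal.ofReal_lt_top).ne
  rw [measure_diff hsub hm.nullMeasurableSet hfin, vol_box, vol_box,
    ← ENNReal.ofReal_prod_of_nonneg (fun i _ => h0 i),
    ← ENNReal.ofReal_prod_of_nonneg (fun i _ => le_trans (h0 i) (hvw i)),
    ← ENNReal.ofReal_sub _ (Finset.prod_nonneg fun i _ => h0 i)]

lemma slab {η x : ℝ} (hη : 0 < η) (hx0 : 0 ≤ x) (hx1 : x < 1) :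
    ∃ k : ℕ, k < ⌈1/η⌉₊ ∧ max (1 - (k+1)*η) 0 ≤ x ∧ x < 1 - k*η := by
  set u := (1 - x)/η with hu
  have hu0 : 0 < u := div_pos (by linarith) hη
  have hc1 : 1 ≤ ⌈u⌉₊ := Nat.one_le_ceil_iff.mpr hu0
  have hceil : (⌈u⌉₊ : ℝ) < u + 1 := Nat.ceil_lt_add_one hu0.le
  have hle : u ≤ ⌈u⌉₊ := Nat.le_ceil u
  have huη : u * η = 1 - x := div_mul_cancel₀ _ hη.ne'
  have hcast : ((⌈u⌉₊ - 1 : ℕ) : ℝ) = (⌈u⌉₊ : ℝ) - 1 := by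
    push_cast [Nat.cast_sub hc1]; ring
  refine ⟨⌈u⌉₊ - 1, ?_, ?_, ?_⟩
  · have h2 : ⌈u⌉₊ ≤ ⌈1/η⌉₊ := Nat.ceil_le_ceil (by
      rw [hu]
      exact (div_le_div_iff_of_pos_right hη).mpr (by linarith))
    omega
  · refine max_le ?_ hx0
    have : u * η ≤ ((⌈u⌉₊ - 1 : ℕ) + 1 : ℝ) * η := by
      apply mul_le_mul_of_nonneg_right _ hη.le
      rw [hcast]; linarith
    nlinarith
  · have : ((⌈u⌉₊ - 1 : ℕ) : ℝ) * η < u * η := by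
      apply mul_lt_mul_of_pos_right _ hη
      rw [hcast]; linarith
    nlinarith

lemma pow_succ_ineq {a c : ℝ} (ha : 0 ≤ a) (hc : 0 ≤ c) (n : ℕ) :
    a^(n+1) + ((n:ℝ)+1)*c*a^n ≤ (a+c)^(n+1) := by
  induction n with
  | zero => simp
  | succ n ih =>
    have hac : 0 ≤ a + c := by linarith
    have h1 : (a+c)^(n+1+1) = (a+c) * (a+c)^(n+1) := by ring
    have h2 : (a+c) * (a^(n+1) + ((n:ℝ)+1)*c*a^n) ≤ (a+c) * (a+c)^(n+1) :=
      mul_le_mul_of_nonneg_left ih hac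
    have h3 : 0 ≤ c * (((n:ℝ)+1)*c*a^n) := by positivity
    have h4 : 0 ≤ a ^ n := pow_nonneg ha _
    push_cast
    simp only [pow_succ] at *
    nlinarith [pow_nonneg ha n]

lemma one_add_inv_pow_le (n : ℕ) (hn : 0 < n) : (1 + 1/(n:ℝ))^n ≤ Real.exp 1 := by
  have hn' : (0:ℝ) < n := by positivity
  have h1 : (1 + 1/(n:ℝ)) ≤ Real.exp (1/n) := by
    have := Real.add_one_le_exp (1/(n:ℝ)); linarith
  calc (1 + 1/(n:ℝ))^n ≤ (Real.exp (1/n))^n := pow_le_pow_left₀ (by positivity) h1 n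
    _ = Real.exp ((n:ℝ) * (1/n)) := by rw [← Real.exp_nat_mul]
    _ = Real.exp 1 := by rw [mul_one_div, div_self hn'.ne']

lemma he2 : (2:ℝ) ≤ Real.exp 1 := by
  have := Real.add_one_le_exp (1:ℝ); linarith

lemma sum_pow_bound (d m : ℕ) (A : ℝ) (hA : 0 ≤ A)
    (hbase : 1 ≤ A + 1 - ((m:ℝ)-1) * (1/((d:ℝ)+1))) :
    ∑ k ∈ Finset.range m, (A + 1 - (k:ℝ)*(1/((d:ℝ)+1)))^(d+1) ≤
      (((d:ℝ)+1)/((d:ℝ)+2)) * (A + 1 + 1/((d:ℝ)+1))^(d+2) := by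
  set c : ℝ := 1/((d:ℝ)+1) with hc
  have hc0 : 0 < c := by rw [hc]; positivity
  have hd1 : (0:ℝ) < (d:ℝ)+1 := by positivity
  have hd2 : (0:ℝ) < (d:ℝ)+2 := by positivity
  set f : ℕ → ℝ := fun k => (((d:ℝ)+1)/((d:ℝ)+2)) * (A + 1 + c - (k:ℝ)*c)^(d+2) with hf
  have hstep : ∀ k ∈ Finset.range m, (A + 1 - (k:ℝ)*c)^(d+1) ≤ f k - f (k+1) := by
    intro k hk
    have hkm : (k:ℝ) ≤ (m:ℝ) - 1 := by
      have := Finset.mem_range.mp hk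
      have : (k:ℝ) + 1 ≤ (m:ℝ) := by exact_mod_cast this
      linarith
    set a : ℝ := A + 1 - (k:ℝ)*c with ha
    have ha1 : 1 ≤ a := by
      rw [ha]
      have : (k:ℝ)*c ≤ ((m:ℝ)-1)*c := mul_le_mul_of_nonneg_right hkm hc0.le
      linarith
    have ha0 : (0:ℝ) ≤ a := by linarith
    have hkey := pow_succ_ineq ha0 hc0.le (d+1)
    have hkey2 : ((d:ℝ)+2)*c*a^(d+1) ≤ (a+c)^(d+2) - a^(d+2) := by
      push_cast at hkey
      linarith
    have he1 : A + 1 + c - (k:ℝ)*c = a + c := by rw [ha]; ring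
    have he2 : A + 1 + c - ((k:ℕ)+1 : ℕ)*c = a := by push_cast; rw [ha]; push_cast; ring
    have hfk : f k - f (k+1) = (((d:ℝ)+1)/((d:ℝ)+2)) * ((a+c)^(d+2) - a^(d+2)) := by
      rw [hf]
      dsimp only
      rw [he1]
      rw [show (((k+1:ℕ)):ℝ) = (k:ℝ)+1 by push_cast; ring]
      rw [show A + 1 + c - ((k:ℝ)+1)*c = a by rw [ha]; ring]
      ring
    rw [hfk]
    have : a^(d+1) = (((d:ℝ)+1)/((d:ℝ)+2)) * (((d:ℝ)+2)*c*a^(d+1)) := by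
      rw [hc]; field_simp
    rw [this]
    exact mul_le_mul_of_nonneg_left hkey2 (by positivity)
  calc ∑ k ∈ Finset.range m, (A + 1 - (k:ℝ)*c)^(d+1)
      ≤ ∑ k ∈ Finset.range m, (f k - f (k+1)) := Finset.sum_le_sum hstep
    _ = f 0 - f m := Finset.sum_range_sub' f m
    _ ≤ f 0 := by
        have : 0 ≤ f m := by
          rw [hf]; dsimp only
          have hbig : 0 ≤ A + 1 + c - (m:ℝ)*c := by
            have : A + 1 + c - (m:ℝ)*c = A + 1 - ((m:ℝ)-1)*c := by ring
            rw [this]; linarith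
          positivity
        linarith
    _ = (((d:ℝ)+1)/((d:ℝ)+2)) * (A + 1 + c)^(d+2) := by rw [hf]; dsimp only; norm_num

set_option maxHeartbeats 2000000 in
lemma key (d : ℕ) : ∀ δ : ℝ, 0 < δ →
    ∃ Δ : Finset ((Fin (d+1) → ℝ) × (Fin (d+1) → ℝ)),
      IsBracketingCover (d+1) δ Δ ∧
      (∀ p ∈ Δ, ∀ i, 0 ≤ p.1 i ∧ p.1 i ≤ p.2 i ∧ p.2 i ≤ 1) ∧
      (Δ.card : ℝ) ≤ (1/2) * (2 * Real.exp 1) ^ (d+1) * (δ⁻¹ + 1) ^ (d+1) := by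
  induction d with
  | zero =>
    intro δ hδ
    have hk1 : ∀ k : ℕ, k < ⌈1/δ⌉₊ → (k:ℝ) * δ < 1 := by
      intro k hkm
      have h : (k:ℝ) < 1/δ := Nat.lt_ceil.mp hkm
      calc (k:ℝ)*δ < (1/δ)*δ := mul_lt_mul_of_pos_right h hδ
        _ = 1 := by field_simp
    refine ⟨(Finset.range ⌈1/δ⌉₊).image fun k : ℕ =>
      ((fun _ : Fin 1 => max (1-((k:ℝ)+1)*δ) 0), (fun _ : Fin 1 => 1 - (k:ℝ)*δ)), ?_, ?_, ?_⟩
    · intro x hx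
      obtain ⟨k, hkm, hlo, hhi⟩ := slab hδ (hx 0).1 (hx 0).2
      refine ⟨_, Finset.mem_image_of_mem _ (Finset.mem_range.mpr hkm), ?_, ?_⟩
      · intro i
        have hi0 : i = 0 := Fin.eq_zero i
        subst hi0
        exact ⟨hlo, hhi.le⟩
      · rw [vol_diff (v := fun _ : Fin 1 => max (1-((k:ℝ)+1)*δ) 0)
          (w := fun _ : Fin 1 => 1 - (k:ℝ)*δ)
          (fun _ => le_max_right _ _)
          (fun _ => max_le (by show (1:ℝ) - ((k:ℝ)+1)*δ ≤ 1 - (k:ℝ)*δ; nlinarith)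
            (by show (0:ℝ) ≤ 1 - (k:ℝ)*δ; nlinarith [hk1 k hkm]))]
        apply ENNReal.ofReal_le_ofReal
        simp only [Finset.prod_const, Finset.card_univ, Fintype.card_fin, pow_one]
        have := le_max_left (1-((k:ℝ)+1)*δ) 0
        linarith
    · intro p hp i
      obtain ⟨k, hk, rfl⟩ := Finset.mem_image.mp hp
      have hkδ := hk1 k (Finset.mem_range.mp hk)
      have hkδ0 : 0 ≤ (k:ℝ)*δ := by positivity
      refine ⟨le_max_right _ _, max_le (by simp only; nlinarith) (by simp only; nlinarith),
        by simp only; nlinarith⟩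
    · calc ((Finset.image _ _).card : ℝ) ≤ ((Finset.range ⌈1/δ⌉₊).card : ℝ) := by
            exact_mod_cast Finset.card_image_le
        _ = (⌈1/δ⌉₊ : ℝ) := by rw [Finset.card_range]
        _ ≤ 1/δ + 1 := (Nat.ceil_lt_add_one (by positivity)).le
        _ ≤ (1/2) * (2 * Real.exp 1) ^ 1 * (δ⁻¹ + 1) ^ 1 := by
            have h2 := he2
            rw [one_div]
            nlinarith [inv_pos.mpr hδ]
  | succ d ih =>
    intro δ hδ
    classical
    have hδ0 : δ ≠ 0 := hδ.ne'
    have hd1 : (0:ℝ) < (d:ℝ) + 1 := by positivity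
    have hd2 : (0:ℝ) < (d:ℝ) + 2 := by positivity
    have hη : 0 < δ / ((d:ℝ)+2) := by positivity
    set η : ℝ := δ / ((d:ℝ)+2) with hηdef
    set m : ℕ := ⌈1/η⌉₊ with hmdef
    have hhi_pos : ∀ k : ℕ, k < m → 0 < 1 - (k:ℝ)*η := by
      intro k hk
      have h : (k:ℝ) < 1/η := Nat.lt_ceil.mp hk
      have h2 := mul_lt_mul_of_pos_right h hη
      rw [one_div_mul_cancel hη.ne'] at h2
      linarith
    set δ' : ℕ → ℝ := fun k => ((d:ℝ)+1)*δ/(((d:ℝ)+2)*(1 - (k:ℝ)*η)) with hδ'def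
    have hδ'pos : ∀ k : ℕ, k < m → 0 < δ' k := by
      intro k hk
      rw [hδ'def]
      exact div_pos (by positivity) (mul_pos hd2 (hhi_pos k hk))
    set ε : ℕ → ℝ := fun k => if 0 < δ' k then δ' k else 1 with hεdef
    have hε : ∀ k, 0 < ε k := by
      intro k; rw [hεdef]; dsimp only; split_ifs with h
      exacts [h, one_pos]
    have hεeq : ∀ k, k < m → ε k = δ' k := by
      intro k hk; rw [hεdef]; exact if_pos (hδ'pos k hk)
    choose F hF1 hF2 hF3 using ih
    obtain ⟨Δ, hΔeq⟩ : ∃ Δ : Finset ((Fin (d+2) → ℝ) × (Fin (d+2) → ℝ)),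
        Δ = (Finset.range m).biUnion (fun k => (F (ε k) (hε k)).image
          fun p : (Fin (d+1) → ℝ) × (Fin (d+1) → ℝ) =>
          (Fin.cons (max (1 - ((k:ℝ)+1)*η) 0) p.1, Fin.cons (1 - (k:ℝ)*η) p.2)) := ⟨_, rfl⟩
    refine ⟨Δ, ?_, ?_, ?_⟩
    · -- bracketing cover
      intro x hx
      obtain ⟨k, hkm, hlo0, hhi0⟩ := slab hη (hx 0).1 (hx 0).2
      obtain ⟨q, hq, hord, hvol⟩ := hF1 (ε k) (hε k) (fun j => x j.succ) (fun j => hx j.succ)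
      refine ⟨(Fin.cons (max (1 - ((k:ℝ)+1)*η) 0) q.1, Fin.cons (1 - (k:ℝ)*η) q.2),
        ?_, ?_, ?_⟩
      · rw [hΔeq]
        exact Finset.mem_biUnion.mpr
          ⟨k, Finset.mem_range.mpr hkm, Finset.mem_image_of_mem _ hq⟩
      · intro i
        induction i using Fin.cases with
        | zero => simpa only [Fin.cons_zero] using ⟨hlo0, hhi0.le⟩
        | succ j => simpa only [Fin.cons_succ] using hord j
      · have hq0 : ∀ j, 0 ≤ q.1 j := fun j => (hF2 _ _ q hq j).1
        have hq12 : ∀ j, q.1 j ≤ q.2 j := fun j => (hF2 _ _ q hq j).2.1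
        have hq2 : ∀ j, q.2 j ≤ 1 := fun j => (hF2 _ _ q hq j).2.2
        have hPv0 : 0 ≤ ∏ j, q.1 j := Finset.prod_nonneg fun j _ => hq0 j
        have hPv1 : ∏ j, q.1 j ≤ 1 :=
          Finset.prod_le_one (fun j _ => hq0 j) (fun j _ => (hq12 j).trans (hq2 j))
        have hPdiff : ∏ j, q.2 j - ∏ j, q.1 j ≤ δ' k := by
          rw [vol_diff hq0 hq12] at hvol
          have h := (ENNReal.ofReal_le_ofReal_iff (hε k).le).mp hvol
          rwa [hεeq k hkm] at h
        have hcons0 : ∀ i, 0 ≤ (Fin.cons (max (1 - ((k:ℝ)+1)*η) 0) q.1 : Fin (d+2) → ℝ) i := by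
          intro i
          induction i using Fin.cases with
          | zero => simpa only [Fin.cons_zero] using le_max_right _ _
          | succ j => simpa only [Fin.cons_succ] using hq0 j
        have hconsle : ∀ i, (Fin.cons (max (1 - ((k:ℝ)+1)*η) 0) q.1 : Fin (d+2) → ℝ) i ≤
            (Fin.cons (1 - (k:ℝ)*η) q.2 : Fin (d+2) → ℝ) i := by
          intro i
          induction i using Fin.cases with
          | zero =>
            simp only [Fin.cons_zero]
            exact max_le (by nlinarith) (hhi_pos k hkm).le
          | succ j => simpa only [Fin.cons_succ] using hq12 j
        rw [vol_diff hcons0 hconsle, Fin.prod_cons, Fin.prod_cons]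
        apply ENNReal.ofReal_le_ofReal
        have hid : (1 - (k:ℝ)*η) * δ' k = ((d:ℝ)+1)*δ/((d:ℝ)+2) := by
          rw [hδ'def]
          dsimp only
          rw [mul_div_assoc']
          rw [mul_comm (((d:ℝ)+2)) (1 - (k:ℝ)*η)]
          rw [mul_div_mul_left _ _ (hhi_pos k hkm).ne']
        have hBη : ((d:ℝ)+1)*δ/((d:ℝ)+2) + η = δ := by
          rw [hηdef]; field_simp; ring
        have hlo_ge : (1 - (k:ℝ)*η) - η ≤ max (1 - ((k:ℝ)+1)*η) 0 := by
          have he : (1 - (k:ℝ)*η) - η = 1 - ((k:ℝ)+1)*η := by ring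
          rw [he]; exact le_max_left _ _
        have h1 : (1 - (k:ℝ)*η) * (∏ j, q.2 j) - (1 - (k:ℝ)*η) * (∏ j, q.1 j)
            ≤ ((d:ℝ)+1)*δ/((d:ℝ)+2) := by
          have h := mul_le_mul_of_nonneg_left hPdiff (hhi_pos k hkm).le
          rw [hid] at h
          nlinarith [h]
        have h2 : ((1 - (k:ℝ)*η) - η) * (∏ j, q.1 j) ≤
            (max (1 - ((k:ℝ)+1)*η) 0) * (∏ j, q.1 j) :=
          mul_le_mul_of_nonneg_right hlo_ge hPv0
        have h3 : η * (∏ j, q.1 j) ≤ η := by nlinarith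
        nlinarith [h1, h2, h3, hBη]
    · -- Good
      intro p hp i
      rw [hΔeq] at hp
      obtain ⟨k, hk, hp2⟩ := Finset.mem_biUnion.mp hp
      obtain ⟨q, hq, rfl⟩ := Finset.mem_image.mp hp2
      have hkm := Finset.mem_range.mp hk
      induction i using Fin.cases with
      | zero =>
        simp only [Fin.cons_zero]
        refine ⟨le_max_right _ _, max_le (by nlinarith) (hhi_pos k hkm).le, ?_⟩
        have h4 : 0 ≤ (k:ℝ)*η := by positivity
        linarith
      | succ j =>
        simp only [Fin.cons_succ]
        exact hF2 _ _ q hq j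
    · -- cardinality
      have hAnn : (0:ℝ) ≤ ((d:ℝ)+2)/(((d:ℝ)+1)*δ) := by positivity
      set A : ℝ := ((d:ℝ)+2)/(((d:ℝ)+1)*δ) with hAdef
      have hinv : ∀ k, k < m → (ε k)⁻¹ + 1 = A + 1 - (k:ℝ)*(1/((d:ℝ)+1)) := by
        intro k hk
        rw [hεeq k hk, hδ'def, hAdef]
        dsimp only
        have h0 : (1 - (k:ℝ)*η) ≠ 0 := (hhi_pos k hk).ne'
        rw [hηdef] at h0 ⊢
        field_simp
        ring
      have hmle : (m:ℝ) ≤ 1/η + 1 := by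
        rw [hmdef]
        exact (Nat.ceil_lt_add_one (by positivity)).le
      have hbase : 1 ≤ A + 1 - ((m:ℝ)-1) * (1/((d:ℝ)+1)) := by
        have h1η : 1/η = ((d:ℝ)+2)/δ := by rw [hηdef]; field_simp
        have hmm : ((m:ℝ)-1) * (1/((d:ℝ)+1)) ≤ (((d:ℝ)+2)/δ) * (1/((d:ℝ)+1)) := by
          apply mul_le_mul_of_nonneg_right _ (by positivity)
          rw [← h1η]; linarith
        have heq : (((d:ℝ)+2)/δ) * (1/((d:ℝ)+1)) = A := by
          rw [hAdef]; field_simp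
        rw [heq] at hmm
        linarith
      have hsum := sum_pow_bound d m A hAnn hbase
      have hcardN : Δ.card ≤ ∑ k ∈ Finset.range m, (F (ε k) (hε k)).card := by
        rw [hΔeq]
        refine le_trans Finset.card_biUnion_le ?_
        exact Finset.sum_le_sum fun k _ => Finset.card_image_le
      have hcard : (Δ.card : ℝ) ≤ ∑ k ∈ Finset.range m, ((F (ε k) (hε k)).card : ℝ) := by
        exact_mod_cast hcardN
      refine hcard.trans ?_
      have hterm : ∀ k ∈ Finset.range m, ((F (ε k) (hε k)).card : ℝ) ≤
          (1/2) * (2*Real.exp 1)^(d+1) * (A + 1 - (k:ℝ)*(1/((d:ℝ)+1)))^(d+1) := by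
        intro k hk
        have h := hF3 (ε k) (hε k)
        rwa [hinv k (Finset.mem_range.mp hk)] at h
      refine (Finset.sum_le_sum hterm).trans ?_
      rw [← Finset.mul_sum]
      have hM : A + 1 + 1/((d:ℝ)+1) = (((d:ℝ)+2)/((d:ℝ)+1)) * (δ⁻¹ + 1) := by
        rw [hAdef]; rw [inv_eq_one_div]; field_simp; ring
      have hexp : (1 + 1/((d:ℝ)+1))^(d+1) ≤ Real.exp 1 := by
        have h := one_add_inv_pow_le (d+1) (Nat.succ_pos d)
        push_cast at h
        exact h
      have hT : (0:ℝ) ≤ (δ⁻¹+1)^(d+2) := by positivity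
      have he3 : (((d:ℝ)+1)/((d:ℝ)+2)) * (A + 1 + 1/((d:ℝ)+1))^(d+2) ≤
          Real.exp 1 * (δ⁻¹+1)^(d+2) := by
        rw [hM, mul_pow]
        have hX : (1 + 1/((d:ℝ)+1)) = ((d:ℝ)+2)/((d:ℝ)+1) := by
          rw [one_add_div hd1.ne']; ring_nf
        have hXc : ((d:ℝ)+1)/((d:ℝ)+2) * (((d:ℝ)+2)/((d:ℝ)+1)) = 1 := by
          rw [div_mul_div_comm, mul_comm]
          exact div_self (by positivity)
        calc ((d:ℝ)+1)/((d:ℝ)+2) * ((((d:ℝ)+2)/((d:ℝ)+1))^(d+2) * (δ⁻¹+1)^(d+2))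
            = (((d:ℝ)+1)/((d:ℝ)+2) * (((d:ℝ)+2)/((d:ℝ)+1))) *
              ((((d:ℝ)+2)/((d:ℝ)+1))^(d+1) * (δ⁻¹+1)^(d+2)) := by ring
          _ = (1 + 1/((d:ℝ)+1))^(d+1) * (δ⁻¹+1)^(d+2) := by rw [hXc, one_mul, hX]
          _ ≤ Real.exp 1 * (δ⁻¹+1)^(d+2) := mul_le_mul_of_nonneg_right hexp hT
      have hfinal : ∑ k ∈ Finset.range m, (A + 1 - (k:ℝ)*(1/((d:ℝ)+1)))^(d+1) ≤
          Real.exp 1 * (δ⁻¹+1)^(d+2) := hsum.trans he3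
      refine le_trans (mul_le_mul_of_nonneg_left hfinal (by positivity)) ?_
      have hgoal : (1/2) * (2*Real.exp 1)^(d+1) * (Real.exp 1 * (δ⁻¹+1)^(d+2)) ≤
          (1/2) * (2*Real.exp 1)^(d+2) * (δ⁻¹+1)^(d+2) := by
        rw [pow_succ (2*Real.exp 1) (d+1)]
        have hx : (0:ℝ) ≤ (2*Real.exp 1)^(d+1) := by positivity
        nlinarith [mul_le_mul_of_nonneg_right
          (show (1/2)*Real.exp 1 ≤ Real.exp 1 by linarith [Real.exp_pos 1])
          (mul_nonneg hx hT)]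
      exact hgoal

theorem stmt2 (d : ℕ) (hd : 1 ≤ d) (δ : ℝ) (hδ : 0 < δ) :
    ∃ Δ : Finset ((Fin d → ℝ) × (Fin d → ℝ)),
      IsBracketingCover d δ Δ ∧
      (Δ.card : ℝ) ≤ (1/2) * (2 * Real.exp 1) ^ d * (δ⁻¹ + 1) ^ d := by
  obtain ⟨e, rfl⟩ : ∃ e, d = e + 1 := ⟨d - 1, by omega⟩
  obtain ⟨Δ, h1, _, h3⟩ := key e δ hδ
  exact ⟨Δ, h1, h3⟩
end

section
/- For any integers d ≥ 1 and h ≥ 1 there exists a 2^{-h}-bracketing cover Δ of [0,1)^d with |Δ| ≤ (1/2)·(2e)^d·(2^{h+2}+1)^d such that every (v,w) ∈ Δ has dyadic coordinates: for each i ∈ {1,…,d}, v_i = 2^{-(⌈log₂(i)⌉+1)(h+1)}·a_i and w_i = 2^{-(⌈log₂(i)⌉+1)(h+2)}·b_i for some integers a_i ∈ {0,…,2^{(⌈log₂(i)⌉+1)(h+1)}} and b_i ∈ {0,…,2^{(⌈log₂(i)⌉+1)(h+2)}}. -/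
/-!
The cover is built by recursive dyadic splitting. Coordinates are cut one at a time: if `P` is
the product of the upper faces fixed so far and `P > δ`, the next coordinate `m` is cut into
`2^n` cells of width `2^{-n}` with `P 2^{-n} ≤ δ W m < 2 P 2^{-n}`; once `P ≤ δ` all remaining
coordinates get the whole interval `[0, 1]`. Cutting coordinate `m` adds at most
`P 2^{-n} ≤ δ W m` to the gap `∏ w - ∏ v`, so weights summing to at most `1` give gaps at most `δ`.

For the count, `θ δ W m ≥ 2` makes the volumes `P (k + 1) 2^{-n}` of the children at least `1/θ`
apart, so the numbers `⌊θ P (k + 1) 2^{-n}⌋` are distinct and the hockey-stick identity bounds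
the number of brackets by `binom(⌊θ P⌋ + m, m)`; Stirling's `2 d^d ≤ d! e^d` bounds
`binom((c + 1) d, d)` by `(e (c + 1))^d / 2`.

The weights `W i = 2^{-(2⌈log₂(i+1)⌉+1)} + 1/(4d)` sum to at most `3/4 + 1/4`, and their first
summand puts every cell width of coordinate `i` on the grid `2^{-(⌈log₂(i+1)⌉+1)(h+1)}`.
-/

open MeasureTheory

open Finset

namespace DyadicBracketing

/-- The least `n` with `1 / 2 ^ n ≤ t` (for `0 < t`). -/
noncomputable def cellExp (t : ℝ) : ℕ := Nat.clog 2 ⌈t⁻¹⌉₊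

lemma inv_le_two_pow_cellExp (t : ℝ) : t⁻¹ ≤ 2 ^ cellExp t :=
  (Nat.le_ceil _).trans (by exact_mod_cast Nat.le_pow_clog one_lt_two _)

lemma one_div_two_pow_cellExp_le {t : ℝ} (ht : 0 < t) : 1 / 2 ^ cellExp t ≤ t := by
  rw [div_le_iff₀ (by positivity), ← inv_mul_le_iff₀ ht, mul_one]
  exact inv_le_two_pow_cellExp t

lemma lt_two_div_two_pow_cellExp {t : ℝ} (ht : 0 < t) (ht2 : t < 2) :
    t < 2 / 2 ^ cellExp t := by
  rcases Nat.eq_zero_or_pos (cellExp t) with h0 | hpos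
  · simpa [h0] using ht2
  · have hlt : 2 ^ (cellExp t - 1) < ⌈t⁻¹⌉₊ :=
      (Nat.lt_clog_iff_pow_lt one_lt_two).1 (Nat.sub_lt hpos one_pos)
    have hlt' : (2 : ℝ) ^ (cellExp t - 1) < t⁻¹ := by exact_mod_cast Nat.lt_ceil.1 hlt
    have hpow : (2 : ℝ) ^ cellExp t = 2 * 2 ^ (cellExp t - 1) := by
      rw [← pow_succ', Nat.sub_add_cancel hpos]
    rw [hpow, lt_div_iff₀ (by positivity)]
    nlinarith [mul_inv_cancel₀ ht.ne']

lemma cellExp_le {t : ℝ} {e : ℕ} (h : 1 / 2 ^ e ≤ t) : cellExp t ≤ e := by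
  have ht : 0 < t := lt_of_lt_of_le (by positivity) h
  refine Nat.clog_le_of_le_pow (Nat.ceil_le.2 ?_)
  rw [Nat.cast_pow, Nat.cast_ofNat, ← one_div]
  exact (one_div_le (by positivity) ht).1 h

lemma div_two_pow_cellExp_le {δ w P : ℝ} (hδw : 0 < δ * w) (hP : 0 < P) :
    P / 2 ^ cellExp (δ * w / P) ≤ δ * w := by
  have h := one_div_two_pow_cellExp_le (div_pos hδw hP)
  rwa [le_div_iff₀ hP, div_mul_eq_mul_div, one_mul] at h

def OnDyadicGrid (e : ℕ) (x : ℝ) : Prop := ∃ a : ℕ, a ≤ 2 ^ e ∧ x = a / 2 ^ e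

lemma onDyadicGrid_div_two_pow {k n e : ℕ} (hk : k ≤ 2 ^ n) (hn : n ≤ e) :
    OnDyadicGrid e (k / 2 ^ n) := by
  refine ⟨k * 2 ^ (e - n), ?_, ?_⟩
  · calc k * 2 ^ (e - n) ≤ 2 ^ n * 2 ^ (e - n) := Nat.mul_le_mul_right _ hk
      _ = 2 ^ e := by rw [← pow_add, Nat.add_sub_cancel' hn]
  · obtain ⟨r, rfl⟩ := Nat.exists_eq_add_of_le hn
    rw [Nat.add_sub_cancel_left, eq_div_iff (by positivity)]
    push_cast
    field_simp
    ring

lemma OnDyadicGrid.mono {e e' : ℕ} {x : ℝ} (h : OnDyadicGrid e x) (he : e ≤ e') :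
    OnDyadicGrid e' x := by
  obtain ⟨a, ha, rfl⟩ := h
  exact onDyadicGrid_div_two_pow ha he

lemma onDyadicGrid_zero (e : ℕ) : OnDyadicGrid e 0 := by
  simpa using onDyadicGrid_div_two_pow (k := 0) (n := 0) (by simp) (Nat.zero_le e)

lemma onDyadicGrid_one (e : ℕ) : OnDyadicGrid e 1 := by
  simpa using onDyadicGrid_div_two_pow (k := 1) (n := 0) (by simp) (Nat.zero_le e)

lemma dyadic_cell_bounds {k n : ℕ} (hk : k < 2 ^ n) :
    0 ≤ (k : ℝ) / 2 ^ n ∧ (k : ℝ) / 2 ^ n ≤ (k + 1) / 2 ^ n ∧ ((k : ℝ) + 1) / 2 ^ n ≤ 1 := by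
  have hk' : (k : ℝ) + 1 ≤ 2 ^ n := by exact_mod_cast hk
  refine ⟨by positivity, by gcongr; linarith, ?_⟩
  rwa [div_le_one (by positivity)]

lemma exists_dyadic_cell {y : ℝ} (hy : y ∈ Set.Ico (0 : ℝ) 1) (n : ℕ) :
    ∃ k : ℕ, k < 2 ^ n ∧ (k : ℝ) / 2 ^ n ≤ y ∧ y < (k + 1) / 2 ^ n := by
  have hy0 : 0 ≤ y * 2 ^ n := mul_nonneg hy.1 (by positivity)
  refine ⟨⌊y * 2 ^ n⌋₊, ?_, ?_, ?_⟩
  · rw [Nat.floor_lt hy0]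
    push_cast
    nlinarith [hy.2, pow_pos (two_pos : (0 : ℝ) < 2) n]
  · rw [div_le_iff₀ (by positivity)]
    exact Nat.floor_le hy0
  · rw [lt_div_iff₀ (by positivity)]
    exact Nat.lt_floor_add_one _

lemma volume_pi_Ico_diff {ι : Type*} [Fintype ι] {v w : ι → ℝ} (hv : 0 ≤ v) (hvw : v ≤ w) :
    volume ((Set.univ.pi fun i => Set.Ico (0 : ℝ) (w i)) \
        (Set.univ.pi fun i => Set.Ico (0 : ℝ) (v i))) =
      ENNReal.ofReal (∏ i, w i - ∏ i, v i) := by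
  have hvol : ∀ u : ι → ℝ, 0 ≤ u →
      volume (Set.univ.pi fun i => Set.Ico (0 : ℝ) (u i)) = ENNReal.ofReal (∏ i, u i) := by
    intro u hu
    simp only [volume_pi_pi, Real.volume_Ico, sub_zero]
    exact (ENNReal.ofReal_prod_of_nonneg fun i _ => hu i).symm
  rw [measure_sdiff (Set.pi_mono fun i _ => Set.Ico_subset_Ico_right (hvw i))
      (MeasurableSet.univ_pi fun _ => measurableSet_Ico).nullMeasurableSet
      (by rw [hvol v hv]; exact ENNReal.ofReal_ne_top),
    hvol v hv, hvol w (hv.trans hvw), ← ENNReal.ofReal_sub _ (prod_nonneg fun i _ => hv i)]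

lemma clog_two_two_pow_add {L x : ℕ} (hx : x < 2 ^ L) : Nat.clog 2 (2 ^ L + x + 1) = L + 1 :=
  le_antisymm (Nat.clog_le_of_le_pow (by rw [pow_succ]; omega))
    ((Nat.lt_clog_iff_pow_lt one_lt_two).2 (by omega))

lemma sum_range_two_pow_half_pow_clog (L : ℕ) :
    ∑ i ∈ range (2 ^ L), (1 / 2 : ℝ) ^ (2 * Nat.clog 2 (i + 1) + 1) = 3 / 4 - (1 / 2) ^ (L + 2) := by
  induction L with
  | zero => norm_num
  | succ L ih =>
    have hblock : ∀ x ∈ range (2 ^ L),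
        (1 / 2 : ℝ) ^ (2 * Nat.clog 2 (2 ^ L + x + 1) + 1) = (1 / 2) ^ (2 * L + 3) := by
      intro x hx
      rw [clog_two_two_pow_add (mem_range.1 hx)]
      ring_nf
    rw [pow_succ, mul_two, sum_range_add, ih, sum_congr rfl hblock, sum_const, card_range,
      nsmul_eq_mul]
    have hsum : ((2 ^ L : ℕ) : ℝ) * (1 / 2) ^ (2 * L + 3) = (1 / 2) ^ (L + 3) := by
      rw [show 2 * L + 3 = L + (L + 3) by ring, pow_add, ← mul_assoc]
      push_cast
      rw [← mul_pow]
      norm_num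
    rw [hsum]
    ring

lemma sum_range_half_pow_clog_le (d : ℕ) :
    ∑ i ∈ range d, (1 / 2 : ℝ) ^ (2 * Nat.clog 2 (i + 1) + 1) ≤ 3 / 4 :=
  calc ∑ i ∈ range d, (1 / 2 : ℝ) ^ (2 * Nat.clog 2 (i + 1) + 1)
      ≤ ∑ i ∈ range (2 ^ Nat.clog 2 d), (1 / 2 : ℝ) ^ (2 * Nat.clog 2 (i + 1) + 1) :=
        sum_le_sum_of_subset_of_nonneg (range_subset_range.2 (Nat.le_pow_clog one_lt_two d))
          fun _ _ _ => by positivity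
    _ ≤ 3 / 4 := by
        rw [sum_range_two_pow_half_pow_clog]
        linarith [pow_pos (one_half_pos (α := ℝ)) (Nat.clog 2 d + 2)]

open Nat Real in
lemma two_mul_pow_self_le_factorial_mul_exp_pow {n : ℕ} (hn : n ≠ 0) :
    2 * (n : ℝ) ^ n ≤ n ! * exp 1 ^ n := by
  have h2 : 2 ≤ √(2 * π * n) := by
    have : (1 : ℝ) ≤ n := by exact_mod_cast Nat.one_le_iff_ne_zero.2 hn
    exact le_sqrt_of_sq_le (by nlinarith [pi_gt_three])
  calc 2 * (n : ℝ) ^ n = 2 * (n / exp 1) ^ n * exp 1 ^ n := by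
        rw [div_pow, mul_assoc, div_mul_cancel₀ _ (by positivity)]
    _ ≤ √(2 * π * n) * (n / exp 1) ^ n * exp 1 ^ n := by gcongr
    _ ≤ n ! * exp 1 ^ n := by gcongr; exact Stirling.le_factorial_stirling n

open Nat Real in
lemma choose_mul_add_self_le (c d : ℕ) (hd : d ≠ 0) :
    (((c * d + d).choose d : ℕ) : ℝ) ≤ 1 / 2 * (exp 1 * (c + 1)) ^ d := by
  have hfac : (0 : ℝ) < d ! := by exact_mod_cast d.factorial_pos
  calc (((c * d + d).choose d : ℕ) : ℝ) ≤ ((c * d + d : ℕ) : ℝ) ^ d / d ! := choose_le_pow_div d _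
    _ = (c + 1) ^ d * (d : ℝ) ^ d / d ! := by push_cast; rw [← mul_pow]; ring
    _ ≤ (c + 1) ^ d * (d ! * exp 1 ^ d / 2) / d ! := by
        gcongr
        linarith [two_mul_pow_self_le_factorial_mul_exp_pow hd]
    _ = 1 / 2 * (exp 1 * (c + 1)) ^ d := by rw [mul_pow]; field_simp

lemma sum_range_comp_le_of_strictMono {M : Type*} [AddCommMonoid M] [PartialOrder M]
    [CanonicallyOrderedAdd M] {f : ℕ → ℕ} (hf : StrictMono f) (g : ℕ → M) {K T : ℕ}
    (hT : ∀ k < K, f k ≤ T) :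
    ∑ k ∈ range K, g (f k) ≤ ∑ u ∈ range (T + 1), g u := by
  rw [← sum_image hf.injective.injOn]
  refine sum_le_sum_of_subset fun u hu => ?_
  obtain ⟨k, hk, rfl⟩ := mem_image.1 hu
  exact mem_range.2 (Nat.lt_succ_of_le (hT k (mem_range.1 hk)))

lemma strictMono_floor_mul_succ {c : ℝ} (hc : 1 ≤ c) :
    StrictMono fun k : ℕ => ⌊c * (k + 1)⌋₊ :=
  strictMono_nat_of_lt_succ fun k => by
    have hx : 0 ≤ c * (k + 1) := by positivity
    calc ⌊c * (k + 1)⌋₊ < ⌊c * (k + 1) + 1⌋₊ := by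
          rw [Nat.floor_add_one hx]; exact Nat.lt_succ_self _
      _ ≤ ⌊c * (((k + 1 : ℕ) : ℝ) + 1)⌋₊ := Nat.floor_le_floor (by push_cast; nlinarith)

open scoped Classical in
/-- Coordinates `m - 1, …, 0` are cut in turn; `P` is the product of the upper faces of the
coordinates cut before (those `≥ m`). -/
noncomputable def dyadicBrackets (δ : ℝ) (W : ℕ → ℝ) :
    (m : ℕ) → ℝ → Finset ((Fin m → ℝ) × (Fin m → ℝ))
  | 0, _ => {(0, 1)}
  | m + 1, P =>
    if P ≤ δ then {(0, 1)} else
      let n := cellExp (δ * W m / P)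
      (range (2 ^ n)).biUnion fun k =>
        (dyadicBrackets δ W m (P * ((k + 1) / 2 ^ n))).image fun p =>
          (Fin.snoc p.1 (k / 2 ^ n), Fin.snoc p.2 ((k + 1) / 2 ^ n))

section

variable {δ : ℝ} {W : ℕ → ℝ}

lemma dyadicBrackets_zero (P : ℝ) : dyadicBrackets δ W 0 P = {(0, 1)} := rfl

lemma dyadicBrackets_succ_of_le {m : ℕ} {P : ℝ} (hP : P ≤ δ) :
    dyadicBrackets δ W (m + 1) P = {(0, 1)} := by
  rw [dyadicBrackets, if_pos hP]

open scoped Classical in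
lemma dyadicBrackets_succ_of_lt {m : ℕ} {P : ℝ} (hP : δ < P) :
    dyadicBrackets δ W (m + 1) P =
      (range (2 ^ cellExp (δ * W m / P))).biUnion fun k =>
        (dyadicBrackets δ W m (P * ((k + 1) / 2 ^ cellExp (δ * W m / P)))).image fun p =>
          (Fin.snoc p.1 ((k : ℝ) / 2 ^ cellExp (δ * W m / P)),
            Fin.snoc p.2 (((k : ℝ) + 1) / 2 ^ cellExp (δ * W m / P))) := by
  rw [dyadicBrackets, if_neg hP.not_ge]

lemma mem_dyadicBrackets_succ {m : ℕ} {P : ℝ} (hP : δ < P)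
    {p : (Fin (m + 1) → ℝ) × (Fin (m + 1) → ℝ)} :
    p ∈ dyadicBrackets δ W (m + 1) P ↔
      ∃ k : ℕ, k < 2 ^ cellExp (δ * W m / P) ∧ ∃ q ∈ dyadicBrackets δ W m
        (P * ((k + 1) / 2 ^ cellExp (δ * W m / P))),
        (Fin.snoc q.1 ((k : ℝ) / 2 ^ cellExp (δ * W m / P)),
          Fin.snoc q.2 (((k : ℝ) + 1) / 2 ^ cellExp (δ * W m / P))) = p := by
  rw [dyadicBrackets_succ_of_lt hP]
  simp only [mem_biUnion, mem_range, mem_image]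

lemma forall_coord_of_mem_dyadicBrackets (hδ : 0 ≤ δ) (Q : ℕ → ℝ → ℝ → Prop)
    (h01 : ∀ i, Q i 0 1) {m : ℕ} {P : ℝ}
    (hcell : ∀ i (k : ℕ) P', δ < P' → P' ≤ P → k < 2 ^ cellExp (δ * W i / P') →
      Q i (k / 2 ^ cellExp (δ * W i / P')) ((k + 1) / 2 ^ cellExp (δ * W i / P')))
    {p : (Fin m → ℝ) × (Fin m → ℝ)} (hp : p ∈ dyadicBrackets δ W m P) (i : Fin m) :
    Q i (p.1 i) (p.2 i) := by
  induction m generalizing P with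
  | zero => exact i.elim0
  | succ m ih =>
    by_cases hP : P ≤ δ
    · rw [dyadicBrackets_succ_of_le hP, mem_singleton] at hp
      subst hp
      exact h01 i
    · obtain ⟨k, hk, q, hq, rfl⟩ := (mem_dyadicBrackets_succ (not_le.1 hP)).1 hp
      have hPk : P * ((k + 1) / 2 ^ cellExp (δ * W m / P)) ≤ P :=
        mul_le_of_le_one_right (by linarith) (dyadic_cell_bounds hk).2.2
      refine Fin.lastCases ?_ (fun j => ?_) i
      · simpa only [Fin.snoc_last, Fin.val_last] using hcell m k P (not_le.1 hP) le_rfl hk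
      · simpa only [Fin.snoc_castSucc, Fin.val_castSucc] using
          ih (fun i k P' h1 h2 => hcell i k P' h1 (h2.trans hPk)) hq j

lemma coord_bounds_of_mem_dyadicBrackets (hδ : 0 ≤ δ) {m : ℕ} {P : ℝ}
    {p : (Fin m → ℝ) × (Fin m → ℝ)} (hp : p ∈ dyadicBrackets δ W m P) (i : Fin m) :
    0 ≤ p.1 i ∧ p.1 i ≤ p.2 i ∧ p.2 i ≤ 1 :=
  forall_coord_of_mem_dyadicBrackets hδ (fun _ v w => 0 ≤ v ∧ v ≤ w ∧ w ≤ 1)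
    (fun _ => by norm_num) (fun _ _ _ _ _ hk => dyadic_cell_bounds hk) hp i

lemma onDyadicGrid_of_mem_dyadicBrackets (hδ : 0 ≤ δ) {E : ℕ → ℕ}
    (hE : ∀ i, 1 / 2 ^ E i ≤ δ * W i) {m : ℕ} {P : ℝ} (hP : P ≤ 1)
    {p : (Fin m → ℝ) × (Fin m → ℝ)} (hp : p ∈ dyadicBrackets δ W m P) (i : Fin m) :
    OnDyadicGrid (E i) (p.1 i) ∧ OnDyadicGrid (E i) (p.2 i) := by
  refine forall_coord_of_mem_dyadicBrackets hδ (fun i v w => OnDyadicGrid (E i) v ∧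
    OnDyadicGrid (E i) w) (fun i => ⟨onDyadicGrid_zero _, onDyadicGrid_one _⟩) ?_ hp i
  intro i k P' hδP' hP' hk
  have hn : cellExp (δ * W i / P') ≤ E i := by
    refine cellExp_le ((hE i).trans (le_div_self ?_ (by linarith) (hP'.trans hP)))
    exact le_trans (by positivity) (hE i)
  exact ⟨onDyadicGrid_div_two_pow hk.le hn, by exact_mod_cast onDyadicGrid_div_two_pow hk hn⟩

lemma exists_mem_dyadicBrackets {m : ℕ} {x : Fin m → ℝ}
    (hx : ∀ i, x i ∈ Set.Ico (0 : ℝ) 1) (P : ℝ) :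
    ∃ p ∈ dyadicBrackets δ W m P, ∀ i, p.1 i ≤ x i ∧ x i < p.2 i := by
  induction m generalizing P with
  | zero => exact ⟨(0, 1), mem_singleton_self _, fun i => i.elim0⟩
  | succ m ih =>
    by_cases hP : P ≤ δ
    · rw [dyadicBrackets_succ_of_le hP]
      exact ⟨(0, 1), mem_singleton_self _, fun i => ⟨(hx i).1, (hx i).2⟩⟩
    · obtain ⟨k, hk, hkx, hxk⟩ := exists_dyadic_cell (hx (Fin.last m)) (cellExp (δ * W m / P))
      obtain ⟨q, hq, hqx⟩ := ih (fun j => hx j.castSucc) (P * ((k + 1) / 2 ^ cellExp (δ * W m / P)))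
      refine ⟨_, (mem_dyadicBrackets_succ (not_le.1 hP)).2 ⟨k, hk, q, hq, rfl⟩,
        fun i => Fin.lastCases ?_ (fun j => ?_) i⟩
      · simpa only [Fin.snoc_last] using ⟨hkx, hxk⟩
      · simpa only [Fin.snoc_castSucc] using hqx j

lemma gap_of_mem_dyadicBrackets (hδ : 0 < δ) (hW : ∀ i, 0 < W i) {m : ℕ} {P : ℝ}
    {p : (Fin m → ℝ) × (Fin m → ℝ)} (hp : p ∈ dyadicBrackets δ W m P) :
    (∏ i, p.1 i = 0 ∧ P * ∏ i, p.2 i ≤ δ) ∨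
      P * (∏ i, p.2 i - ∏ i, p.1 i) ≤ δ * ∑ i : Fin m, W i := by
  induction m generalizing P with
  | zero =>
    rw [dyadicBrackets_zero, mem_singleton] at hp
    simp [hp]
  | succ m ih =>
    by_cases hP : P ≤ δ
    · rw [dyadicBrackets_succ_of_le hP, mem_singleton] at hp
      subst hp
      exact Or.inl ⟨prod_eq_zero (mem_univ 0) rfl, by simpa using hP⟩
    · obtain ⟨k, hk, q, hq, rfl⟩ := (mem_dyadicBrackets_succ (not_le.1 hP)).1 hp
      set n := cellExp (δ * W m / P)
      have hP0 : 0 < P := hδ.trans (not_le.1 hP)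
      have hq1 : 0 ≤ ∏ i, q.1 i ∧ ∏ i, q.1 i ≤ 1 := by
        have hb := coord_bounds_of_mem_dyadicBrackets hδ.le hq
        exact ⟨prod_nonneg fun i _ => (hb i).1, prod_le_one (fun i _ => (hb i).1)
          fun i _ => (hb i).2.1.trans (hb i).2.2⟩
      have hPn : P / 2 ^ n ≤ δ * W m := div_two_pow_cellExp_le (mul_pos hδ (hW m)) hP0
      simp only [Fin.prod_snoc]
      rcases ih hq with ⟨hz, hle⟩ | hgap
      · refine Or.inl ⟨by rw [hz, zero_mul], ?_⟩
        calc P * ((∏ i, q.2 i) * ((k + 1) / 2 ^ n))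
            = P * ((k + 1) / 2 ^ n) * ∏ i, q.2 i := by ring
          _ ≤ δ := hle
      · refine Or.inr ?_
        rw [Fin.sum_univ_castSucc]
        simp only [Fin.val_castSucc, Fin.val_last]
        calc P * ((∏ i, q.2 i) * ((k + 1) / 2 ^ n) - (∏ i, q.1 i) * (k / 2 ^ n))
            = P * ((k + 1) / 2 ^ n) * (∏ i, q.2 i - ∏ i, q.1 i) + (∏ i, q.1 i) * (P / 2 ^ n) := by
              ring
          _ ≤ δ * ∑ i : Fin m, W i + 1 * (δ * W m) :=
              add_le_add hgap (mul_le_mul hq1.2 hPn (by positivity) zero_le_one)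
          _ = δ * (∑ i : Fin m, W i + W m) := by ring

lemma card_dyadicBrackets_le (hδ : 0 < δ) (hW : ∀ i, 0 < W i) (hW1 : ∀ i, W i ≤ 1) {θ : ℝ}
    (hθ : ∀ i, 2 ≤ θ * (δ * W i)) (m : ℕ) (P : ℝ) :
    #(dyadicBrackets δ W m P) ≤ (⌊θ * P⌋₊ + m).choose m := by
  induction m generalizing P with
  | zero => simp [dyadicBrackets_zero]
  | succ m ih =>
    by_cases hP : P ≤ δ
    · rw [dyadicBrackets_succ_of_le hP, card_singleton]
      exact Nat.choose_pos (Nat.le_add_left _ _)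
    · have hδP : δ < P := not_le.1 hP
      have hP0 : 0 < P := hδ.trans hδP
      have hδW : 0 < δ * W m := mul_pos hδ (hW m)
      set n := cellExp (δ * W m / P)
      have hθ0 : 0 ≤ θ := nonneg_of_mul_nonneg_left (zero_le_two.trans (hθ m)) hδW
      have hstep : 1 ≤ θ * (P / 2 ^ n) := by
        have h : δ * W m < 2 / 2 ^ n * P := by
          rw [← div_lt_iff₀ hP0]
          exact lt_two_div_two_pow_cellExp (div_pos hδW hP0)
            (((div_lt_one hP0).2 (by nlinarith [hW1 m])).trans one_lt_two)
        linarith [hθ m, mul_le_mul_of_nonneg_left h.le hθ0,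
          show θ * (2 / 2 ^ n * P) = 2 * (θ * (P / 2 ^ n)) by ring]
      have hfT : ∀ k : ℕ, k < 2 ^ n → ⌊θ * (P / 2 ^ n) * (k + 1)⌋₊ ≤ ⌊θ * P⌋₊ := fun k hk =>
        Nat.floor_le_floor <| calc
          θ * (P / 2 ^ n) * (k + 1) = θ * (P * ((k + 1) / 2 ^ n)) := by ring
          _ ≤ θ * P := mul_le_mul_of_nonneg_left
            (mul_le_of_le_one_right hP0.le (dyadic_cell_bounds hk).2.2) hθ0
      rw [dyadicBrackets_succ_of_lt hδP]
      calc #((range (2 ^ n)).biUnion _)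
          ≤ ∑ k ∈ range (2 ^ n), #(dyadicBrackets δ W m (P * ((k + 1) / 2 ^ n))) :=
            card_biUnion_le.trans (sum_le_sum fun _ _ => card_image_le)
        _ ≤ ∑ k ∈ range (2 ^ n), (⌊θ * (P / 2 ^ n) * (k + 1)⌋₊ + m).choose m :=
            sum_le_sum fun k _ => (ih _).trans_eq (by ring_nf)
        _ ≤ ∑ u ∈ range (⌊θ * P⌋₊ + 1), (u + m).choose m :=
            sum_range_comp_le_of_strictMono (strictMono_floor_mul_succ hstep)
              (fun u => (u + m).choose m) hfT
        _ = (⌊θ * P⌋₊ + (m + 1)).choose (m + 1) := by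
            rw [Nat.sum_range_add_choose, add_assoc]

lemma isBracketingCover_dyadicBrackets (hδ : 0 < δ) (hW : ∀ i, 0 < W i) {d : ℕ}
    (hWsum : ∑ i : Fin d, W i ≤ 1) : IsBracketingCover d δ (dyadicBrackets δ W d 1) := by
  intro x hx
  obtain ⟨p, hp, hpx⟩ := exists_mem_dyadicBrackets hx 1
  have hb := coord_bounds_of_mem_dyadicBrackets hδ.le hp
  refine ⟨p, hp, fun i => ⟨(hpx i).1, (hpx i).2.le⟩, ?_⟩
  rw [volume_pi_Ico_diff (fun i => (hb i).1) (fun i => (hb i).2.1)]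
  refine ENNReal.ofReal_le_ofReal ?_
  rcases gap_of_mem_dyadicBrackets hδ hW hp with ⟨hv, hw⟩ | hgap
  · linarith
  · nlinarith

end

noncomputable def levelWeight (d i : ℕ) : ℝ := (1 / 2) ^ (2 * Nat.clog 2 (i + 1) + 1) + 1 / (4 * d)

lemma levelWeight_pos (d i : ℕ) : 0 < levelWeight d i := by
  unfold levelWeight
  positivity

lemma levelWeight_le_one (d i : ℕ) : levelWeight d i ≤ 1 := by
  have h1 : (1 / 2 : ℝ) ^ (2 * Nat.clog 2 (i + 1) + 1) ≤ 1 / 2 :=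
    pow_le_of_le_one (by norm_num) (by norm_num) (by omega)
  have h2 : 1 / (4 * d : ℝ) ≤ 1 / 2 := by
    rcases Nat.eq_zero_or_pos d with rfl | hd
    · norm_num
    · gcongr
      have : (1 : ℝ) ≤ d := by exact_mod_cast hd
      linarith
  unfold levelWeight
  linarith

lemma sum_levelWeight_le_one (d : ℕ) : ∑ i : Fin d, levelWeight d i ≤ 1 := by
  have h : ∑ _i : Fin d, 1 / (4 * d : ℝ) ≤ 1 / 4 := by
    rcases Nat.eq_zero_or_pos d with rfl | hd
    · norm_num
    · rw [sum_const, card_univ, Fintype.card_fin, nsmul_eq_mul, mul_one_div,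
        div_le_iff₀ (by positivity)]
      linarith
  simp only [levelWeight, sum_add_distrib]
  rw [Fin.sum_univ_eq_sum_range (fun i => (1 / 2 : ℝ) ^ (2 * Nat.clog 2 (i + 1) + 1))]
  linarith [sum_range_half_pow_clog_le d]

lemma one_div_two_pow_le_levelWeight {h : ℕ} (hh : 1 ≤ h) (d i : ℕ) :
    1 / 2 ^ ((Nat.clog 2 (i + 1) + 1) * (h + 1)) ≤ ((2 : ℝ) ^ h)⁻¹ * levelWeight d i :=
  calc 1 / 2 ^ ((Nat.clog 2 (i + 1) + 1) * (h + 1))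
      ≤ (1 : ℝ) / 2 ^ (h + (2 * Nat.clog 2 (i + 1) + 1)) :=
        one_div_pow_le_one_div_pow_of_le one_le_two (by nlinarith)
    _ = ((2 : ℝ) ^ h)⁻¹ * (1 / 2) ^ (2 * Nat.clog 2 (i + 1) + 1) := by
        rw [pow_add, one_div_pow, one_div, one_div, mul_inv]
    _ ≤ ((2 : ℝ) ^ h)⁻¹ * levelWeight d i := by
        unfold levelWeight
        gcongr
        exact le_add_of_nonneg_right (by positivity)

lemma two_le_mul_levelWeight {d : ℕ} (hd : d ≠ 0) (h i : ℕ) :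
    2 ≤ ((8 * 2 ^ h * d : ℕ) : ℝ) * (((2 : ℝ) ^ h)⁻¹ * levelWeight d i) := by
  have hd' : (0 : ℝ) < d := by exact_mod_cast Nat.pos_of_ne_zero hd
  have hW : 1 / (4 * d : ℝ) ≤ levelWeight d i :=
    le_add_of_nonneg_left (by positivity)
  calc (2 : ℝ) = (8 * 2 ^ h * d) * ((2 ^ h)⁻¹ * (1 / (4 * d))) := by field_simp; ring
    _ ≤ ((8 * 2 ^ h * d : ℕ) : ℝ) * (((2 : ℝ) ^ h)⁻¹ * levelWeight d i) := by
        push_cast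
        gcongr

end DyadicBracketing

open DyadicBracketing

/-- Coordinate `(i : Fin d)` is coordinate `i + 1` of the paper. -/
theorem stmt3 (d h : ℕ) (hd : 1 ≤ d) (hh : 1 ≤ h) :
    ∃ Δ : Finset ((Fin d → ℝ) × (Fin d → ℝ)),
      IsBracketingCover d (((2:ℝ) ^ h)⁻¹) Δ ∧
      (Δ.card : ℝ) ≤ (1/2) * (2 * Real.exp 1) ^ d * ((2:ℝ) ^ (h+2) + 1) ^ d ∧
      ∀ p ∈ Δ, ∀ i : Fin d,
        (∃ a : ℕ, a ≤ 2 ^ ((Nat.clog 2 ((i : ℕ) + 1) + 1) * (h + 1)) ∧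
          p.1 i = (a : ℝ) / 2 ^ ((Nat.clog 2 ((i : ℕ) + 1) + 1) * (h + 1))) ∧
        (∃ b : ℕ, b ≤ 2 ^ ((Nat.clog 2 ((i : ℕ) + 1) + 1) * (h + 2)) ∧
          p.2 i = (b : ℝ) / 2 ^ ((Nat.clog 2 ((i : ℕ) + 1) + 1) * (h + 2))) := by
  have hδ : (0 : ℝ) < ((2 : ℝ) ^ h)⁻¹ := by positivity
  refine ⟨dyadicBrackets ((2 : ℝ) ^ h)⁻¹ (levelWeight d) d 1,
    isBracketingCover_dyadicBrackets hδ (levelWeight_pos d) (sum_levelWeight_le_one d), ?_,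
    fun p hp i => ?_⟩
  · have hcard := card_dyadicBrackets_le hδ (levelWeight_pos d) (levelWeight_le_one d)
      (two_le_mul_levelWeight (by omega) h) d 1
    rw [mul_one, Nat.floor_natCast] at hcard
    calc (#(dyadicBrackets ((2 : ℝ) ^ h)⁻¹ (levelWeight d) d 1) : ℝ)
        ≤ (((8 * 2 ^ h) * d + d).choose d : ℕ) := by exact_mod_cast hcard
      _ ≤ 1 / 2 * (Real.exp 1 * ((8 * 2 ^ h : ℕ) + 1)) ^ d := choose_mul_add_self_le _ _ (by omega)
      _ ≤ 1 / 2 * (2 * Real.exp 1) ^ d * ((2 : ℝ) ^ (h + 2) + 1) ^ d := by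
        rw [mul_assoc, ← mul_pow]
        gcongr 1 / 2 * ?_ ^ d
        push_cast
        nlinarith [Real.exp_pos 1, pow_succ (2 : ℝ) (h + 1), pow_succ (2 : ℝ) h]
  · obtain ⟨hv, hw⟩ := onDyadicGrid_of_mem_dyadicBrackets hδ.le
      (one_div_two_pow_le_levelWeight hh d) le_rfl hp i
    exact ⟨hv, hw.mono (Nat.mul_le_mul_left _ (by omega))⟩
end

section
/- (Maximal Bernstein inequality) Let Z_1,…,Z_N be i.i.d. real random variables with mean zero, variance σ² > 0, and |Z_1| ≤ 1 almost surely. Then for every t > 0, P(max_{1≤M≤N} |∑_{n=1}^M Z_n| > t) ≤ 2·exp(−t²/(2Nσ² + 2t/3)). -/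
/-!
For `l ≥ 0` the process `exp (l * S_k)`, `S_k = Z 0 + ⋯ + Z (k-1)`, is a nonnegative submartingale:
each step multiplies it by the independent factor `exp (l * Z k)`, whose mean is at least `1`
because `Z k` is centred. Doob's maximal inequality therefore bounds
`P(max_{M ≤ N} S_M > t)` by `e^{-lt} E[e^{l S_N}] = e^{-lt} ∏ E[e^{l Z n}]`.
Comparing the exponential series termwise, `|Z| ≤ 1` gives `E[e^{l Z}] ≤ exp (σ² (e^l - 1 - l))`,
and `(n + 2)! ≥ 2 · 3^n` gives `e^l - 1 - l ≤ l² / (2 (1 - l/3))`. The choice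
`l = t / (N σ² + t/3)` turns the exponent into `-t² / (2 N σ² + 2t/3)`; applying the
one-sided bound to `-Z` as well accounts for the factor `2`.
-/

open MeasureTheory ProbabilityTheory Finset Real
open scoped Nat NNReal ENNReal

namespace Real

theorem exp_sub_one_sub_eq_tsum (x : ℝ) :
    exp x - 1 - x = ∑' n : ℕ, x ^ (n + 2) / (n + 2)! := by
  have hsum := summable_pow_div_factorial x
  rw [exp_eq_exp_ℝ, NormedSpace.exp_eq_tsum_div]
  beta_reduce
  rw [hsum.tsum_eq_zero_add, ((summable_nat_add_iff 1).mpr hsum).tsum_eq_zero_add]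
  simp

theorem exp_mul_sub_one_sub_le {l x : ℝ} (hl : 0 ≤ l) (hx : |x| ≤ 1) :
    exp (l * x) - 1 - l * x ≤ x ^ 2 * (exp l - 1 - l) := by
  rw [exp_sub_one_sub_eq_tsum, exp_sub_one_sub_eq_tsum, ← tsum_mul_left]
  refine Summable.tsum_le_tsum (fun n => ?_)
    ((summable_nat_add_iff 2).mpr (summable_pow_div_factorial _))
    (((summable_nat_add_iff 2).mpr (summable_pow_div_factorial l)).mul_left _)
  rw [mul_div_assoc']
  gcongr
  calc (l * x) ^ (n + 2) = l ^ (n + 2) * (x ^ n * x ^ 2) := by ring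
    _ ≤ l ^ (n + 2) * (1 * x ^ 2) := by
        gcongr
        exact (le_abs_self _).trans (by rw [abs_pow]; exact pow_le_one₀ (abs_nonneg x) hx)
    _ = x ^ 2 * l ^ (n + 2) := by ring

theorem exp_sub_one_sub_le_of_lt_three {l : ℝ} (hl : 0 ≤ l) (hl3 : l < 3) :
    exp l - 1 - l ≤ l ^ 2 / (2 * (1 - l / 3)) := by
  have hgeom : HasSum (fun n : ℕ => l ^ 2 / 2 * (l / 3) ^ n) (l ^ 2 / 2 * (1 - l / 3)⁻¹) :=
    (hasSum_geometric_of_lt_one (by positivity) (by linarith)).mul_left _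
  rw [exp_sub_one_sub_eq_tsum, div_mul_eq_div_div, div_eq_mul_inv (l ^ 2 / 2), ← hgeom.tsum_eq]
  refine Summable.tsum_le_tsum (fun n => ?_)
    ((summable_nat_add_iff 2).mpr (summable_pow_div_factorial l)) hgeom.summable
  have hfac : (2 * 3 ^ n : ℝ) ≤ (n + 2)! := by
    exact_mod_cast (Nat.factorial_mul_pow_le_factorial (m := 2) (n := n)).trans_eq
      (by rw [add_comm])
  calc l ^ (n + 2) / (n + 2)! ≤ l ^ (n + 2) / (2 * 3 ^ n) := by gcongr
    _ = l ^ 2 / 2 * (l / 3) ^ n := by rw [div_pow]; ring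

theorem bernstein_exponent_le {a t : ℝ} (ha : 0 < a) (ht : 0 ≤ t) :
    a * (exp (t / (a + t / 3)) - 1 - t / (a + t / 3)) - t / (a + t / 3) * t
      ≤ -t ^ 2 / (2 * a + 2 * t / 3) := by
  have hd : 0 < a + t / 3 := by positivity
  have hl3 : t / (a + t / 3) < 3 := by rw [div_lt_iff₀ hd]; linarith
  calc _ ≤ a * ((t / (a + t / 3)) ^ 2 / (2 * (1 - t / (a + t / 3) / 3)))
        - t / (a + t / 3) * t := by
        gcongr
        exact exp_sub_one_sub_le_of_lt_three (by positivity) hl3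
    _ = -t ^ 2 / (2 * a + 2 * t / 3) := by
        have : 1 - t / (a + t / 3) / 3 = a / (a + t / 3) := by field_simp; ring
        rw [this]
        field_simp
        ring

end Real

section BoundedMGF

variable {Ω : Type*} {mΩ : MeasurableSpace Ω} {μ : Measure Ω} [IsProbabilityMeasure μ]
  {X : Ω → ℝ} {l : ℝ}

theorem one_le_mgf_of_integral_eq_zero (hX : Integrable X μ)
    (hexp : Integrable (fun ω => exp (l * X ω)) μ) (h0 : μ[X] = 0) : 1 ≤ mgf X μ l := by
  calc (1 : ℝ) = μ[fun ω => 1 + l * X ω] := by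
        rw [integral_add (integrable_const 1) (hX.const_mul l), integral_const_mul, h0]; simp
    _ ≤ mgf X μ l := integral_mono (by fun_prop) hexp fun ω => by
        simpa [add_comm] using add_one_le_exp (l * X ω)

theorem integrable_exp_mul_of_abs_le_one (hX : AEStronglyMeasurable X μ)
    (hbdd : ∀ᵐ ω ∂μ, |X ω| ≤ 1) (hl : 0 ≤ l) : Integrable (fun ω => exp (l * X ω)) μ :=
  Integrable.of_bound (by fun_prop) (exp l) <| by
    filter_upwards [hbdd] with ω hω
    rw [norm_eq_abs, abs_exp, exp_le_exp]
    exact mul_le_of_le_one_right hl (abs_le.mp hω).2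

theorem mgf_le_exp_of_abs_le_one {v : ℝ} (hX : AEStronglyMeasurable X μ)
    (hbdd : ∀ᵐ ω ∂μ, |X ω| ≤ 1) (h0 : μ[X] = 0) (hsq : μ[X ^ 2] ≤ v) (hl : 0 ≤ l) :
    mgf X μ l ≤ exp (v * (exp l - 1 - l)) := by
  set e := exp l - 1 - l
  have he : 0 ≤ e := by linarith [add_one_le_exp l]
  have hint : Integrable X μ := Integrable.of_bound hX 1 (by simpa using hbdd)
  have hint_sq : Integrable (X ^ 2) μ :=
    Integrable.of_bound (hX.pow 2) 1 <| by
      filter_upwards [hbdd] with ω hω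
      simpa [abs_pow] using hω
  have hint_lin : Integrable (fun ω => 1 + l * X ω) μ :=
    (integrable_const 1).add (hint.const_mul l)
  calc mgf X μ l ≤ μ[fun ω => 1 + l * X ω + (X ^ 2) ω * e] := by
        refine integral_mono_ae (integrable_exp_mul_of_abs_le_one hX hbdd hl)
          (hint_lin.add (hint_sq.mul_const e)) ?_
        filter_upwards [hbdd] with ω hω
        have := exp_mul_sub_one_sub_le hl hω
        simp only [Pi.pow_apply]
        linarith
    _ = 1 + μ[X ^ 2] * e := by
        rw [integral_add hint_lin (hint_sq.mul_const e),
          integral_add (integrable_const 1) (hint.const_mul l), integral_const_mul, h0,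
          integral_mul_const]
        simp
    _ ≤ 1 + v * e := by gcongr
    _ ≤ exp (v * e) := by linarith [add_one_le_exp (v * e)]

end BoundedMGF

section PrefixFiltration

variable {Ω : Type*} {mΩ : MeasurableSpace Ω} {μ : Measure Ω} {N : ℕ} {Z : ℕ → Ω → ℝ}

def prefixFiltration (N : ℕ) (Z : ℕ → Ω → ℝ) (hZ : ∀ n, Measurable (Z n)) :
    Filtration ℕ mΩ where
  seq k := ⨆ (i : Fin N) (_ : (i : ℕ) < k), MeasurableSpace.comap (Z i) inferInstance
  mono' _ _ hkl := biSup_mono fun _ hi => hi.trans_le hkl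
  le' _ := iSup₂_le fun i _ => (hZ i).comap_le

theorem measurable_prefixFiltration (hZ : ∀ n, Measurable (Z n)) {n k : ℕ} (hnk : n < k)
    (hnN : n < N) :
    Measurable[prefixFiltration N Z hZ k] (Z n) :=
  Measurable.of_comap_le (le_iSup₂_of_le (f := fun (i : Fin N) (_ : (i : ℕ) < k) =>
    MeasurableSpace.comap (Z i) inferInstance) ⟨n, hnN⟩ hnk le_rfl)

theorem indep_prefixFiltration (hZ : ∀ n, Measurable (Z n))
    (hindep : iIndepFun (fun n : Fin N => Z n) μ) {k : ℕ} (hk : k < N) :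
    Indep (prefixFiltration N Z hZ k) (MeasurableSpace.comap (Z k) inferInstance) μ := by
  have h := indep_iSup_of_disjoint (fun i : Fin N => (hZ i).comap_le) hindep.iIndep
    (S := {i | (i : ℕ) < k}) (T := {⟨k, hk⟩}) (by simp)
  rwa [_root_.iSup_singleton] at h

theorem indepFun_of_measurable_prefixFiltration (hZ : ∀ n, Measurable (Z n))
    (hindep : iIndepFun (fun n : Fin N => Z n) μ)
    {k : ℕ} (hk : k < N) {f : Ω → ℝ} (hf : Measurable[prefixFiltration N Z hZ k] f) {g : ℝ → ℝ}
    (hg : Measurable g) : IndepFun f (fun ω => g (Z k ω)) μ := by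
  rw [IndepFun_iff_Indep]
  exact indep_of_indep_of_le_right (indep_of_indep_of_le_left
    (indep_prefixFiltration hZ hindep hk) hf.comap_le)
    (hg.comp (Measurable.of_comap_le le_rfl)).comap_le

-- Stopped at `N`, so that it is a submartingale at all times and not only up to `N`.
noncomputable def expPartialSum (N : ℕ) (Z : ℕ → Ω → ℝ) (l : ℝ) (k : ℕ) (ω : Ω) : ℝ :=
  exp (l * ∑ n ∈ range (min k N), Z n ω)

variable {l : ℝ}

theorem expPartialSum_succ {k : ℕ} (hk : k < N) :
    expPartialSum N Z l (k + 1) = expPartialSum N Z l k * fun ω => exp (l * Z k ω) := by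
  ext ω
  simp [expPartialSum, min_eq_left (Nat.succ_le_of_lt hk), min_eq_left hk.le, sum_range_succ,
    mul_add, exp_add]

theorem expPartialSum_succ_of_le {k : ℕ} (hk : N ≤ k) :
    expPartialSum N Z l (k + 1) = expPartialSum N Z l k := by
  funext ω
  simp only [expPartialSum, min_eq_right hk, min_eq_right (hk.trans k.le_succ)]

theorem measurable_expPartialSum (hZ : ∀ n, Measurable (Z n)) (k : ℕ) :
    Measurable[prefixFiltration N Z hZ k] (expPartialSum N Z l k) :=
  (measurable_const.mul (Finset.measurable_sum _ fun _ hn => measurable_prefixFiltration hZ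
    ((mem_range.mp hn).trans_le (min_le_left _ _))
    ((mem_range.mp hn).trans_le (min_le_right _ _)))).exp

theorem indepFun_indicator_expPartialSum (hZ : ∀ n, Measurable (Z n))
    (hindep : iIndepFun (fun n : Fin N => Z n) μ) {k : ℕ}
    (hk : k < N) {s : Set Ω} (hs : MeasurableSet[prefixFiltration N Z hZ k] s) :
    IndepFun (s.indicator (expPartialSum N Z l k)) (fun ω => exp (l * Z k ω)) μ :=
  indepFun_of_measurable_prefixFiltration hZ hindep hk
    ((measurable_expPartialSum hZ k).indicator hs) (measurable_const.mul measurable_id).exp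

theorem setIntegral_expPartialSum_succ (hZ : ∀ n, Measurable (Z n))
    (hindep : iIndepFun (fun n : Fin N => Z n) μ) {k : ℕ}
    (hk : k < N) {s : Set Ω} (hs : MeasurableSet[prefixFiltration N Z hZ k] s) :
    ∫ ω in s, expPartialSum N Z l (k + 1) ω ∂μ
      = (∫ ω in s, expPartialSum N Z l k ω ∂μ) * mgf (Z k) μ l := by
  have hs' : MeasurableSet s := (prefixFiltration N Z hZ).le k s hs
  have hmul : s.indicator (expPartialSum N Z l k * fun ω => exp (l * Z k ω))
      = s.indicator (expPartialSum N Z l k) * fun ω => exp (l * Z k ω) :=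
    funext fun _ => Set.indicator_mul_left _ _ _
  rw [← integral_indicator hs', ← integral_indicator hs', expPartialSum_succ hk, hmul]
  exact (indepFun_indicator_expPartialSum hZ hindep hk hs).integral_mul_eq_mul_integral
    (((measurable_expPartialSum hZ k).mono ((prefixFiltration N Z hZ).le k) le_rfl).indicator
      hs').aestronglyMeasurable
    ((hZ k).const_mul l).exp.aestronglyMeasurable

theorem integrable_expPartialSum (hZ : ∀ n, Measurable (Z n))
    (hindep : iIndepFun (fun n : Fin N => Z n) μ)
    (hint : ∀ n < N, Integrable (fun ω => exp (l * Z n ω)) μ) (k : ℕ) :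
    Integrable (expPartialSum N Z l k) μ := by
  have := hindep.isProbabilityMeasure
  induction k with
  | zero => exact (integrable_const 1).congr (ae_of_all _ fun ω => by simp [expPartialSum])
  | succ k ih =>
    rcases lt_or_ge k N with hk | hk
    · rw [expPartialSum_succ hk]
      exact (indepFun_of_measurable_prefixFiltration hZ hindep hk (measurable_expPartialSum hZ k)
        (measurable_const.mul measurable_id).exp).integrable_mul ih (hint k hk)
    · rwa [expPartialSum_succ_of_le hk]

theorem submartingale_expPartialSum (hZ : ∀ n, Measurable (Z n))
    (hindep : iIndepFun (fun n : Fin N => Z n) μ)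
    (hint : ∀ n < N, Integrable (fun ω => exp (l * Z n ω)) μ)
    (hmgf : ∀ n < N, 1 ≤ mgf (Z n) μ l) :
    Submartingale (expPartialSum N Z l) (prefixFiltration N Z hZ) μ := by
  have := hindep.isProbabilityMeasure
  refine submartingale_of_setIntegral_le_succ
    (fun k => (measurable_expPartialSum hZ k).stronglyMeasurable)
    (integrable_expPartialSum hZ hindep hint) fun k s hs => ?_
  rcases lt_or_ge k N with hk | hk
  · rw [setIntegral_expPartialSum_succ hZ hindep hk hs]
    exact le_mul_of_one_le_right
      (setIntegral_nonneg_of_ae_restrict (ae_of_all _ fun _ => (exp_pos _).le)) (hmgf k hk)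
  · rw [expPartialSum_succ_of_le hk]

theorem measure_exists_partialSum_gt_le (hZ : ∀ n, Measurable (Z n))
    (hindep : iIndepFun (fun n : Fin N => Z n) μ)
    (hint : ∀ n < N, Integrable (fun ω => exp (l * Z n ω)) μ)
    (hmgf : ∀ n < N, 1 ≤ mgf (Z n) μ l) (hl : 0 ≤ l) (c : ℝ) :
    μ {ω | ∃ M, 1 ≤ M ∧ M ≤ N ∧ c < ∑ n ∈ range M, Z n ω}
      ≤ ENNReal.ofReal (exp (-(l * c)) * mgf (fun ω => ∑ n ∈ range N, Z n ω) μ l) := by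
  have := hindep.isProbabilityMeasure
  set X := expPartialSum N Z l
  set ε : ℝ≥0 := (exp (l * c)).toNNReal
  set E := {ω | (ε : ℝ) ≤ (range (N + 1)).sup' nonempty_range_add_one fun k => X k ω}
  have hsub : {ω | ∃ M, 1 ≤ M ∧ M ≤ N ∧ c < ∑ n ∈ range M, Z n ω} ⊆ E := by
    rintro ω ⟨M, -, hMN, hM⟩
    refine le_trans ?_ (le_sup' (fun k => X k ω) (mem_range.mpr (Nat.lt_succ_of_le hMN)))
    rw [Real.coe_toNNReal _ (exp_pos _).le]
    simp only [X, expPartialSum, min_eq_left hMN]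
    exact exp_le_exp.mpr (mul_le_mul_of_nonneg_left hM.le hl)
  have hmax : (ε : ℝ≥0∞) * μ E ≤ ENNReal.ofReal (mgf (fun ω => ∑ n ∈ range N, Z n ω) μ l) := by
    refine (maximal_ineq (submartingale_expPartialSum hZ hindep hint hmgf)
      (fun _ _ => (exp_pos _).le) N).trans (ENNReal.ofReal_le_ofReal ?_)
    refine (setIntegral_le_integral (integrable_expPartialSum hZ hindep hint N)
      (ae_of_all _ fun _ => (exp_pos _).le)).trans_eq ?_
    simp [expPartialSum, mgf]
  calc μ {ω | ∃ M, 1 ≤ M ∧ M ≤ N ∧ c < ∑ n ∈ range M, Z n ω}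
      ≤ μ E := measure_mono hsub
    _ = ENNReal.ofReal (exp (-(l * c))) * (ε * μ E) := by
        rw [← mul_assoc, show (ε : ℝ≥0∞) = ENNReal.ofReal (exp (l * c)) from rfl,
          ← ENNReal.ofReal_mul (exp_pos _).le, ← exp_add, neg_add_cancel, exp_zero,
          ENNReal.ofReal_one, one_mul]
    _ ≤ ENNReal.ofReal (exp (-(l * c)))
          * ENNReal.ofReal (mgf (fun ω => ∑ n ∈ range N, Z n ω) μ l) := by
        gcongr
    _ = _ := (ENNReal.ofReal_mul (exp_pos _).le).symm

end PrefixFiltration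

section Bernstein

variable {Ω : Type*} {mΩ : MeasurableSpace Ω} {μ : Measure Ω} {N : ℕ} {Z : ℕ → Ω → ℝ} {v t : ℝ}

theorem measure_exists_partialSum_gt_le_bernstein (hN : 1 ≤ N) (hv : 0 < v)
    (hZ : ∀ n, Measurable (Z n)) (hindep : iIndepFun (fun n : Fin N => Z n) μ)
    (hmean : ∀ n < N, μ[Z n] = 0) (hsq : ∀ n < N, μ[Z n ^ 2] ≤ v)
    (hbdd : ∀ n < N, ∀ᵐ ω ∂μ, |Z n ω| ≤ 1) (ht : 0 < t) :
    μ {ω | ∃ M, 1 ≤ M ∧ M ≤ N ∧ t < ∑ n ∈ range M, Z n ω}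
      ≤ ENNReal.ofReal (exp (-t ^ 2 / (2 * N * v + 2 * t / 3))) := by
  have := hindep.isProbabilityMeasure
  have ha : 0 < N * v := mul_pos (by exact_mod_cast hN) hv
  set l := t / (N * v + t / 3)
  have hl : 0 ≤ l := by positivity
  have hint n (hn : n < N) : Integrable (fun ω => exp (l * Z n ω)) μ :=
    integrable_exp_mul_of_abs_le_one (hZ n).aestronglyMeasurable (hbdd n hn) hl
  have hmgf_le n (hn : n < N) : mgf (Z n) μ l ≤ exp (v * (exp l - 1 - l)) :=
    mgf_le_exp_of_abs_le_one (hZ n).aestronglyMeasurable (hbdd n hn) (hmean n hn) (hsq n hn) hl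
  have hmgf_sum : mgf (fun ω => ∑ n ∈ range N, Z n ω) μ l ≤ exp (N * v * (exp l - 1 - l)) := by
    have hsum : (fun ω => ∑ n ∈ range N, Z n ω) = ∑ i : Fin N, Z i := by
      ext ω; simp [Fin.sum_univ_eq_sum_range (fun n => Z n ω)]
    rw [hsum, hindep.mgf_sum (fun i => hZ i), mul_assoc, exp_nat_mul]
    calc ∏ i : Fin N, mgf (Z i) μ l ≤ ∏ _i : Fin N, exp (v * (exp l - 1 - l)) :=
          prod_le_prod (fun _ _ => mgf_nonneg) fun i _ => hmgf_le i i.isLt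
      _ = _ := by simp
  calc μ {ω | ∃ M, 1 ≤ M ∧ M ≤ N ∧ t < ∑ n ∈ range M, Z n ω}
      ≤ ENNReal.ofReal (exp (-(l * t)) * mgf (fun ω => ∑ n ∈ range N, Z n ω) μ l) :=
        measure_exists_partialSum_gt_le hZ hindep hint
          (fun n hn => one_le_mgf_of_integral_eq_zero
            (Integrable.of_bound (hZ n).aestronglyMeasurable 1 (by simpa using hbdd n hn))
            (hint n hn) (hmean n hn)) hl t
    _ ≤ ENNReal.ofReal (exp (N * v * (exp l - 1 - l) - l * t)) := by
        rw [exp_sub, div_eq_inv_mul, ← exp_neg]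
        gcongr
    _ ≤ ENNReal.ofReal (exp (-t ^ 2 / (2 * N * v + 2 * t / 3))) := by
        gcongr
        simpa [mul_assoc] using bernstein_exponent_le ha ht.le

theorem measure_exists_abs_partialSum_gt_le_bernstein (hN : 1 ≤ N) (hv : 0 < v)
    (hZ : ∀ n, Measurable (Z n)) (hindep : iIndepFun (fun n : Fin N => Z n) μ)
    (hmean : ∀ n < N, μ[Z n] = 0) (hsq : ∀ n < N, μ[Z n ^ 2] ≤ v)
    (hbdd : ∀ n < N, ∀ᵐ ω ∂μ, |Z n ω| ≤ 1) (ht : 0 < t) :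
    μ {ω | ∃ M, 1 ≤ M ∧ M ≤ N ∧ t < |∑ n ∈ range M, Z n ω|}
      ≤ ENNReal.ofReal (2 * exp (-t ^ 2 / (2 * N * v + 2 * t / 3))) := by
  have hupper := measure_exists_partialSum_gt_le_bernstein hN hv hZ hindep hmean hsq hbdd ht
  have hlower := measure_exists_partialSum_gt_le_bernstein (Z := fun n ω => -Z n ω) hN hv
    (fun n => (hZ n).neg) (hindep.comp (fun _ x => -x) fun _ => measurable_neg)
    (fun n hn => by simp [integral_neg, hmean n hn]) (fun n hn => by simpa using hsq n hn)
    (fun n hn => by simpa using hbdd n hn) ht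
  have hsub : {ω | ∃ M, 1 ≤ M ∧ M ≤ N ∧ t < |∑ n ∈ range M, Z n ω|}
      ⊆ {ω | ∃ M, 1 ≤ M ∧ M ≤ N ∧ t < ∑ n ∈ range M, Z n ω}
        ∪ {ω | ∃ M, 1 ≤ M ∧ M ≤ N ∧ t < ∑ n ∈ range M, -Z n ω} := by
    rintro ω ⟨M, h1, h2, h3⟩
    rcases lt_abs.mp h3 with h | h
    · exact Or.inl ⟨M, h1, h2, h⟩
    · exact Or.inr ⟨M, h1, h2, by rwa [sum_neg_distrib]⟩
  calc _ ≤ _ := measure_mono hsub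
    _ ≤ _ := measure_union_le _ _
    _ ≤ _ := add_le_add hupper hlower
    _ = _ := by rw [← ENNReal.ofReal_add (exp_pos _).le (exp_pos _).le, ← two_mul]

end Bernstein

/-- Maximal Bernstein inequality: if `Z 0, …, Z (N-1)` are i.i.d. mean-zero random
variables with variance `σ² > 0` and `|Z n| ≤ 1` a.s., then for every `t > 0`,
`P(max_{1 ≤ M ≤ N} |∑_{n<M} Z n| > t) ≤ 2 exp(−t²/(2Nσ² + 2t/3))`. -/
theorem stmt11 {Ω : Type*} [MeasurableSpace Ω] (μ : Measure Ω) [IsProbabilityMeasure μ]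
    (N : ℕ) (hN : 1 ≤ N) (Z : ℕ → Ω → ℝ) (σ : ℝ) (hσ : 0 < σ ^ 2)
    (hmeas : ∀ n, Measurable (Z n))
    (hindep : iIndepFun (m := fun _ : Fin N => (inferInstance : MeasurableSpace ℝ))
      (fun n : Fin N => Z n) μ)
    (hident : ∀ n < N, Measure.map (Z n) μ = Measure.map (Z 0) μ)
    (hmean : μ[Z 0] = 0)
    (hvar : variance (Z 0) μ = σ ^ 2)
    (hbdd : ∀ n < N, ∀ᵐ ω ∂μ, |Z n ω| ≤ 1)
    (t : ℝ) (ht : 0 < t) :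
    μ {ω | ∃ M, 1 ≤ M ∧ M ≤ N ∧ t < |∑ n ∈ Finset.range M, Z n ω|}
      ≤ ENNReal.ofReal (2 * Real.exp (-(t ^ 2) / (2 * N * σ ^ 2 + 2 * t / 3))) := by
  have hid n (hn : n < N) : IdentDistrib (Z n) (Z 0) μ μ :=
    ⟨(hmeas n).aemeasurable, (hmeas 0).aemeasurable, hident n hn⟩
  have hsq0 : μ[Z 0 ^ 2] = σ ^ 2 := by
    rw [← hvar, variance_eq_sub (MemLp.of_bound (hmeas 0).aestronglyMeasurable 1
      (by simpa using hbdd 0 hN)), hmean]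
    ring
  exact measure_exists_abs_partialSum_gt_le_bernstein hN hσ hmeas hindep
    (fun n hn => (hid n hn).integral_eq.trans hmean)
    (fun n hn => (((hid n hn).comp (continuous_pow 2).measurable).integral_eq.trans hsq0).le)
    hbdd ht
end

section
/- For any real t > 0, constants C₁ > 0, integers m, h, d with d ≥ 2 and √d·√(2^{m+1}) ≤ 2^{m−h}, if t = C₁·√d·√(2^{m+1})·√(h·2^{1.5κ−h}) with κ = ⌈log₂(h+2)⌉, then 2^{κ+1}·exp(−t²·2^{-1.5κ}/((8+2√2)·2^{m−h} + 2t/3)) ≤ 4·exp(−(2C₁²/(8+2√2+2C₁) − 1)·h·d). -/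
/-! With `A = 2^{m-h}`, the numerator `t² 2^{-3κ/2}` equals `2 C₁² d h A`, while the hypothesis
on `√d √(2^{m+1})` together with `h 2^{3κ/2-h} ≤ 9` gives `t ≤ 3 C₁ A`, so the denominator is at
most `(8 + 2√2 + 2C₁) A`. The prefactor is absorbed by `2^{κ+1} ≤ 4(h+1) ≤ 4 e^{hd}`. -/

open Real

lemma two_pow_clog_le (n : ℕ) : 2 ^ Nat.clog 2 (n + 2) ≤ 2 * (n + 1) := by
  have hpos : 0 < Nat.clog 2 (n + 2) := Nat.clog_pos one_lt_two (by omega)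
  have hlt := Nat.pow_pred_clog_lt_self one_lt_two (show 1 < n + 2 by omega)
  rw [Nat.pred_eq_sub_one] at hlt
  calc 2 ^ Nat.clog 2 (n + 2) = 2 * 2 ^ (Nat.clog 2 (n + 2) - 1) := by
        rw [← pow_succ', Nat.sub_add_cancel hpos]
    _ ≤ 2 * (n + 1) := by omega

lemma eight_mul_sq_mul_succ_pow_three_le (n : ℕ) : 8 * n ^ 2 * (n + 1) ^ 3 ≤ 81 * 4 ^ n := by
  rcases lt_or_ge n 3 with hn | hn
  · interval_cases n <;> norm_num
  induction n, hn using Nat.le_induction with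
  | base => norm_num
  | succ k hk ih =>
    calc 8 * (k + 1) ^ 2 * (k + 1 + 1) ^ 3 ≤ 4 * (8 * k ^ 2 * (k + 1) ^ 3) := by
          have hratio : (k + 2) ^ 3 ≤ 4 * k ^ 2 * (k + 1) := by nlinarith
          nlinarith [Nat.mul_le_mul_left ((k + 1) ^ 2) hratio]
      _ ≤ 4 * (81 * 4 ^ k) := by gcongr
      _ = 81 * 4 ^ (k + 1) := by ring

lemma two_rpow_sq_mul_four_pow (κ h : ℕ) :
    ((2 : ℝ) ^ ((3 / 2 : ℝ) * κ - h)) ^ 2 * 4 ^ h = ((2 : ℝ) ^ κ) ^ 3 := by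
  have hfour : (4 : ℝ) ^ h = 2 ^ ((2 * h : ℕ) : ℝ) := by
    rw [Real.rpow_natCast, pow_mul]; norm_num
  rw [← Real.rpow_natCast _ 2, ← Real.rpow_mul zero_le_two, hfour, ← Real.rpow_add two_pos,
    show (3 / 2 * κ - h : ℝ) * (2 : ℕ) + (2 * h : ℕ) = (κ * 3 : ℕ) by push_cast; ring,
    Real.rpow_natCast, pow_mul]

lemma mul_two_rpow_clog_le_nine (h : ℕ) :
    (h : ℝ) * 2 ^ ((3 / 2 : ℝ) * Nat.clog 2 (h + 2) - h) ≤ 9 := by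
  set x : ℝ := (h : ℝ) * 2 ^ ((3 / 2 : ℝ) * Nat.clog 2 (h + 2) - h)
  have hx : 0 ≤ x := by positivity
  have hnat : h ^ 2 * (2 ^ Nat.clog 2 (h + 2)) ^ 3 ≤ 81 * 4 ^ h :=
    calc h ^ 2 * (2 ^ Nat.clog 2 (h + 2)) ^ 3 ≤ h ^ 2 * (2 * (h + 1)) ^ 3 := by
          gcongr; exact two_pow_clog_le h
      _ = 8 * h ^ 2 * (h + 1) ^ 3 := by ring
      _ ≤ 81 * 4 ^ h := eight_mul_sq_mul_succ_pow_three_le h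
  have hsq : x ^ 2 * 4 ^ h ≤ 81 * 4 ^ h := by
    rw [mul_pow, mul_assoc, two_rpow_sq_mul_four_pow]
    exact_mod_cast hnat
  nlinarith [le_of_mul_le_mul_right hsq (by positivity)]

lemma two_pow_succ_mul_rpow_sub_mul_inv (m : ℕ) (a b : ℝ) :
    (2 : ℝ) ^ (m + 1) * (2 ^ (a - b) * (2 ^ a)⁻¹) = 2 * 2 ^ ((m : ℝ) - b) := by
  rw [Real.rpow_sub two_pos, Real.rpow_sub two_pos, Real.rpow_natCast]
  field_simp
  ring

lemma two_pow_clog_succ_le_exp (h d : ℕ) (hd : 1 ≤ d) :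
    (2 : ℝ) ^ (Nat.clog 2 (h + 2) + 1) ≤ 4 * exp (h * d) := by
  have hnat : 2 ^ (Nat.clog 2 (h + 2) + 1) ≤ 4 * (h + 1) := by
    have := two_pow_clog_le h; rw [pow_succ]; omega
  have hd' : (1 : ℝ) ≤ d := by exact_mod_cast hd
  calc (2 : ℝ) ^ (Nat.clog 2 (h + 2) + 1) ≤ 4 * ((h : ℝ) + 1) := by exact_mod_cast hnat
    _ ≤ 4 * (h * d + 1) := by gcongr; nlinarith [(h.cast_nonneg : (0 : ℝ) ≤ h)]
    _ ≤ 4 * exp (h * d) := by gcongr; exact add_one_le_exp _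

lemma neg_div_le_of_le_three_mul {A B C N t : ℝ} (hA : 0 < A) (hB : 0 < B) (hN : 0 ≤ N)
    (ht0 : 0 ≤ t) (ht : t ≤ 3 * C * A) :
    -(N * A) / (B * A + 2 * t / 3) ≤ -(N / (B + 2 * C)) := by
  rw [neg_div, neg_le_neg_iff, ← mul_div_mul_right _ _ hA.ne']
  apply div_le_div_of_nonneg_left (by positivity) (by positivity)
  linarith

theorem stmt16_general (d m h κ : ℕ) (hd : 2 ≤ d)
    (hκ : κ = Nat.clog 2 (h + 2))
    (hmh : Real.sqrt d * Real.sqrt (2 ^ (m + 1)) ≤ (2:ℝ) ^ ((m : ℝ) - h))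
    (C₁ : ℝ) (hC₁ : 0 < C₁) (t : ℝ)
    (ht : t = C₁ * Real.sqrt d * Real.sqrt (2 ^ (m + 1)) *
      Real.sqrt ((h : ℝ) * (2:ℝ) ^ ((3/2 : ℝ) * κ - h))) :
    (2:ℝ) ^ (κ + 1) *
        Real.exp (-(t ^ 2 * ((2:ℝ) ^ ((3/2 : ℝ) * κ))⁻¹) /
          ((8 + 2 * Real.sqrt 2) * (2:ℝ) ^ ((m : ℝ) - h) + 2 * t / 3))
      ≤ 4 * Real.exp (-(2 * C₁ ^ 2 / (8 + 2 * Real.sqrt 2 + 2 * C₁) - 1) * h * d) := by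
  set A : ℝ := 2 ^ ((m : ℝ) - h)
  have hA : 0 < A := by positivity
  have ht0 : 0 ≤ t := ht ▸ by positivity
  have hsqrt : √((h : ℝ) * 2 ^ ((3 / 2 : ℝ) * κ - h)) ≤ 3 :=
    Real.sqrt_le_iff.mpr ⟨by norm_num, by linarith [hκ ▸ mul_two_rpow_clog_le_nine h]⟩
  have ht_le : t ≤ 3 * C₁ * A := by
    rw [ht]
    nlinarith [mul_le_mul hmh hsqrt (sqrt_nonneg _) hA.le]
  have hnum : t ^ 2 * ((2 : ℝ) ^ ((3 / 2 : ℝ) * κ))⁻¹ = 2 * C₁ ^ 2 * (d * h) * A := by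
    rw [ht, mul_pow, mul_pow, mul_pow, sq_sqrt (by positivity), sq_sqrt (by positivity),
      sq_sqrt (by positivity)]
    linear_combination (C₁ ^ 2 * d * h) * two_pow_succ_mul_rpow_sub_mul_inv m _ h
  calc _ ≤ 4 * exp (h * d) * exp (-(2 * C₁ ^ 2 * (d * h) / (8 + 2 * √2 + 2 * C₁))) := by
        gcongr
        · exact hκ ▸ two_pow_clog_succ_le_exp h d (by omega)
        · rw [hnum]
          exact neg_div_le_of_le_three_mul hA (by positivity) (by positivity) ht0 ht_le
    _ = _ := by rw [mul_assoc, ← exp_add]; ring_nf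

/-- The key exponential bound: with `κ = ⌈log₂(h+2)⌉` and
`t = C₁·√d·√(2^{m+1})·√(h·2^{1.5κ−h})`, assuming `√d·√(2^{m+1}) ≤ 2^{m−h}`,
`2^{κ+1}·exp(−t²·2^{−1.5κ}/((8+2√2)·2^{m−h} + 2t/3))
  ≤ 4·exp(−(2C₁²/(8+2√2+2C₁) − 1)·h·d)`. -/
theorem stmt16 (d m h κ : ℕ) (hd : 2 ≤ d) (hh : 1 ≤ h)
    (hκ : κ = Nat.clog 2 (h + 2))
    (hmh : Real.sqrt d * Real.sqrt (2 ^ (m + 1)) ≤ (2:ℝ) ^ ((m : ℝ) - h))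
    (C₁ : ℝ) (hC₁ : 0 < C₁) (t : ℝ) (htpos : 0 < t)
    (ht : t = C₁ * Real.sqrt d * Real.sqrt (2 ^ (m + 1)) *
      Real.sqrt ((h : ℝ) * (2:ℝ) ^ ((3/2 : ℝ) * κ - h))) :
    (2:ℝ) ^ (κ + 1) *
        Real.exp (-(t ^ 2 * ((2:ℝ) ^ ((3/2 : ℝ) * κ))⁻¹) /
          ((8 + 2 * Real.sqrt 2) * (2:ℝ) ^ ((m : ℝ) - h) + 2 * t / 3))
      ≤ 4 * Real.exp (-(2 * C₁ ^ 2 / (8 + 2 * Real.sqrt 2 + 2 * C₁) - 1) * h * d) :=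
  stmt16_general d m h κ hd hκ hmh C₁ hC₁ t ht
end
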